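/- arXiv:1411.6306 — 6 statements merged into one kernel-verified Lean document; each statement's English description precedes it below -/
import Mathlib

section
/- Let A, B, C, D be integers with A² + B² + C² = 3D², gcd(A, B, C) = 1 and D ≠ 0. Then D is odd, each of A, B, C is odd, and none of A, B, C is divisible by 3; equivalently, each of A, B, C is congruent to 1 or −1 modulo 6. -/
/-!
Squares are `0` or `1` both modulo `3` and modulo `4`. Modulo `3`, the equation forces
`A² + B² + C² ≡ 0`, so either `3` divides all of `A, B, C` or none of them. Modulo `4`, the
left side counts the odd ones among `A, B, C` while `3D² ≡ 0` or `3`, so either all of them are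
even or all of them and `D` are odd. Primitivity rules out the first alternative in both cases.
-/

namespace Int

theorem sq_emod_four_eq_emod_two (x : ℤ) : x ^ 2 % 4 = x % 2 := by
  rcases even_or_odd' x with ⟨k, rfl | rfl⟩ <;> ring_nf <;> omega

theorem sq_emod_three (x : ℤ) : x ^ 2 % 3 = 0 ∧ 3 ∣ x ∨ x ^ 2 % 3 = 1 ∧ ¬ 3 ∣ x := by
  have h : (x % 3) ^ 2 % 3 = x ^ 2 % 3 := (mod_modEq x 3).pow 2
  rcases (by omega : x % 3 = 0 ∨ x % 3 = 1 ∨ x % 3 = 2) with hr | hr | hr <;>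
    rw [hr] at h <;> omega

theorem odd_of_sq_add_sq_add_sq_eq_three_mul_sq {a b c d : ℤ}
    (h : a ^ 2 + b ^ 2 + c ^ 2 = 3 * d ^ 2) (h2 : ¬ (2 ∣ a ∧ 2 ∣ b ∧ 2 ∣ c)) :
    Odd a ∧ Odd b ∧ Odd c ∧ Odd d := by
  have ha := sq_emod_four_eq_emod_two a
  have hb := sq_emod_four_eq_emod_two b
  have hc := sq_emod_four_eq_emod_two c
  have hd := sq_emod_four_eq_emod_two d
  simp only [odd_iff]
  rcases emod_two_eq d with hd' | hd' <;> omega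

theorem not_three_dvd_of_three_dvd_sq_add_sq_add_sq {a b c : ℤ}
    (h : 3 ∣ a ^ 2 + b ^ 2 + c ^ 2) (h3 : ¬ (3 ∣ a ∧ 3 ∣ b ∧ 3 ∣ c)) :
    ¬ 3 ∣ a ∧ ¬ 3 ∣ b ∧ ¬ 3 ∣ c := by
  have := sq_emod_three a
  have := sq_emod_three b
  have := sq_emod_three c
  omega

theorem not_dvd_and_dvd_and_dvd_of_gcd_eq_one {a b c p : ℤ} (hp : ¬ IsUnit p)
    (h : gcd (gcd a b) c = 1) : ¬ (p ∣ a ∧ p ∣ b ∧ p ∣ c) := by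
  rintro ⟨ha, hb, hc⟩
  have hp1 : p ∣ 1 := by
    simpa only [h, Nat.cast_one] using dvd_coe_gcd (dvd_coe_gcd ha hb) hc
  exact hp (isUnit_of_dvd_one hp1)

theorem modEq_one_or_neg_one_six_of_odd_of_not_dvd {x : ℤ} (hx : Odd x) (h3 : ¬ 3 ∣ x) :
    x ≡ 1 [ZMOD 6] ∨ x ≡ -1 [ZMOD 6] := by
  rw [odd_iff] at hx
  unfold ModEq
  omega

end Int

theorem stmt_3_general (A B C D : ℤ) (heq : A^2 + B^2 + C^2 = 3 * D^2)
    (hgcd : Int.gcd (Int.gcd A B) C = 1) :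
    Odd D ∧ Odd A ∧ Odd B ∧ Odd C ∧
    ¬ (3 ∣ A) ∧ ¬ (3 ∣ B) ∧ ¬ (3 ∣ C) ∧
    (A ≡ 1 [ZMOD 6] ∨ A ≡ -1 [ZMOD 6]) ∧
    (B ≡ 1 [ZMOD 6] ∨ B ≡ -1 [ZMOD 6]) ∧
    (C ≡ 1 [ZMOD 6] ∨ C ≡ -1 [ZMOD 6]) := by
  obtain ⟨hA, hB, hC, hD⟩ := Int.odd_of_sq_add_sq_add_sq_eq_three_mul_sq heq
    (Int.not_dvd_and_dvd_and_dvd_of_gcd_eq_one (by decide) hgcd)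
  obtain ⟨hA3, hB3, hC3⟩ := Int.not_three_dvd_of_three_dvd_sq_add_sq_add_sq ⟨D ^ 2, heq⟩
    (Int.not_dvd_and_dvd_and_dvd_of_gcd_eq_one (by norm_num [Int.isUnit_iff]) hgcd)
  exact ⟨hD, hA, hB, hC, hA3, hB3, hC3, Int.modEq_one_or_neg_one_six_of_odd_of_not_dvd hA hA3,
    Int.modEq_one_or_neg_one_six_of_odd_of_not_dvd hB hB3,
    Int.modEq_one_or_neg_one_six_of_odd_of_not_dvd hC hC3⟩

theorem stmt_3 (A B C D : ℤ) (heq : A^2 + B^2 + C^2 = 3 * D^2)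
    (hgcd : Int.gcd (Int.gcd A B) C = 1) (hD : D ≠ 0) :
    Odd D ∧ Odd A ∧ Odd B ∧ Odd C ∧
    ¬ (3 ∣ A) ∧ ¬ (3 ∣ B) ∧ ¬ (3 ∣ C) ∧
    (A ≡ 1 [ZMOD 6] ∨ A ≡ -1 [ZMOD 6]) ∧
    (B ≡ 1 [ZMOD 6] ∨ B ≡ -1 [ZMOD 6]) ∧
    (C ≡ 1 [ZMOD 6] ∨ C ≡ -1 [ZMOD 6]) :=
  stmt_3_general A B C D heq hgcd
end

section
/- Let q be a quaternion with rational components, let m, n be integers, and set r = (m − n/2) + (n/2)·(i + j + k). Then (q·r)·(i + j + k)·(conjugate of (q·r)) = (m² − mn + n²) · ( q·(i + j + k)·(conjugate of q) ). -/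
/-!
Put `u = i + j + k`. The quaternion `r = (m - n/2) + (n/2) u` is a polynomial in `u`, so it commutes
with `u`, and hence `r u r̄ = u r r̄ = N(r) u` with `N(r) = (m - n/2)² + 3 (n/2)² = m² - mn + n²`.
Conjugating by `q` then gives `(q r) u (q r)‾ = q (r u r̄) q̄ = N(r) q u q̄`.
-/

open scoped Quaternion

theorem mul_mul_mul_star_mul {A : Type*} [Monoid A] [StarMul A] (q r u : A) :
    q * r * u * star (q * r) = q * (r * u * star r) * star q := by
  simp only [star_mul, mul_assoc]

namespace Quaternion

theorem mul_mul_star_of_commute {R : Type*} [CommRing R] {r u : ℍ[R]} (h : Commute r u) :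
    r * u * star r = normSq r • u := by
  rw [h.eq, mul_assoc, self_mul_star, mul_coe_eq_smul]

end Quaternion

open Quaternion in
theorem stmt_5 (q : ℍ[ℚ]) (m n : ℤ) :
    let i : ℍ[ℚ] := ⟨0, 1, 0, 0⟩
    let j : ℍ[ℚ] := ⟨0, 0, 1, 0⟩
    let k : ℍ[ℚ] := ⟨0, 0, 0, 1⟩
    let r : ℍ[ℚ] := ((m : ℚ) - (n : ℚ)/2 : ℚ) • (1 : ℍ[ℚ]) + ((n : ℚ)/2) • (i + j + k)
    (q * r) * (i + j + k) * star (q * r) =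
      ((m : ℚ)^2 - (m : ℚ)*(n : ℚ) + (n : ℚ)^2) • (q * (i + j + k) * star q) := by
  intro i j k r
  have hr_commute : Commute r (i + j + k) :=
    ((Commute.one_left _).smul_left _).add_left ((Commute.refl _).smul_left _)
  have hr_normSq : normSq r = (m : ℚ) ^ 2 - m * n + n ^ 2 := by
    simp only [normSq_def', r, re_add, imI_add, imJ_add, imK_add, re_smul, imI_smul, imJ_smul,
      imK_smul, re_one, imI_one, imJ_one, imK_one]
    simp only [i, j, k]
    ring
  rw [mul_mul_mul_star_mul, mul_mul_star_of_commute hr_commute, hr_normSq, mul_smul_comm,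
    smul_mul_assoc]
end

section
/- Let 𝒜 = {n : ℤ | ∃ x y : ℤ, gcd(x, y) = 1 ∧ n = 3x² − y²}, ℬ = {n : ℤ | ∃ x y : ℤ, gcd(x, y) = 1 ∧ n = x² + y²}, and 𝒞 = {n : ℤ | ∃ x y : ℤ, gcd(x, y) = 1 ∧ n = 2(x² − xy + y²)}. Then 𝒜 ∩ ℬ is a proper subset of 𝒞, i.e., 𝒜 ∩ ℬ ⊆ 𝒞 and 𝒞 ⊄ 𝒜 ∩ ℬ. -/
/-!
Let `n = 3x² - y² = a² + b²` with both pairs coprime. Working mod 4 gives `n = 2m` with `m` odd,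
and `9 ∤ n`. For a prime `q ∣ m` other than `3`, both `-1` and `3` are squares mod `q`, hence so
is `-3`, which forces `q ≡ 1 (mod 3)`. Such primes are norms `c² - cd + d²` of Eisenstein integers
(Thue's lemma applied to a root of `X² - X + 1` mod `q`), and multiplying Eisenstein integers,
using the conjugate when needed to keep the product primitive, represents `m` primitively.
Conversely `6 = 2(2² - 2·1 + 1²)`, but `-1` is not a square mod `3`, so `6` is not a sum of two
coprime squares.
-/

/-- `u² - uv + v²` is the norm of `u + vω`, where `ω² + ω + 1 = 0`; the product
`(c + dω)(s + tω) = (cs - dt) + (ct + ds - dt)ω` is the composition used below. -/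
def IsPrimEisensteinNorm (m : ℤ) : Prop :=
  ∃ u v : ℤ, IsCoprime u v ∧ m = u ^ 2 - u * v + v ^ 2

theorem dvd_norm_right_of_dvd_eisensteinMul {c d s t w : ℤ} (hcd : IsCoprime c d)
    (hP : w ∣ c * s - d * t) (hQ : w ∣ c * t + d * s - d * t) :
    w ∣ s ^ 2 - s * t + t ^ 2 := by
  obtain ⟨α, β, h⟩ := hcd
  have key : (α * (s - t) - β * t) * (c * s - d * t) + (α * t + β * s) * (c * t + d * s - d * t)
      = s ^ 2 - s * t + t ^ 2 := by linear_combination (s ^ 2 - s * t + t ^ 2) * h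
  exact key ▸ dvd_add (hP.mul_left _) (hQ.mul_left _)

theorem dvd_norm_left_of_dvd_eisensteinMul {c d s t w : ℤ} (hst : IsCoprime s t)
    (hP : w ∣ c * s - d * t) (hQ : w ∣ c * t + d * s - d * t) :
    w ∣ c ^ 2 - c * d + d ^ 2 :=
  dvd_norm_right_of_dvd_eisensteinMul hst (by rwa [mul_comm s, mul_comm t])
    (by rwa [mul_comm s, mul_comm t, mul_comm t, add_comm (d * s)])

theorem prime_dvd_of_not_isCoprime_eisensteinMul {p c d s t : ℤ} (hp : Prime p)
    (hst : IsCoprime s t) (hpcd : p = c ^ 2 - c * d + d ^ 2)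
    (h : ¬ IsCoprime (c * s - d * t) (c * t + d * s - d * t)) :
    p ∣ c * s - d * t ∧ p ∣ c * t + d * s - d * t := by
  obtain ⟨w, hP, hQ, hw⟩ :
      ∃ w, w ∣ c * s - d * t ∧ w ∣ c * t + d * s - d * t ∧ ¬ IsUnit w := by
    simpa [IsRelPrime] using mt IsRelPrime.isCoprime h
  have hwp : w ∣ p := hpcd ▸ dvd_norm_left_of_dvd_eisensteinMul hst hP hQ
  have hpw : p ∣ w := ((hp.irreducible.dvd_iff.mp hwp).resolve_left hw).dvd
  exact ⟨hpw.trans hP, hpw.trans hQ⟩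

namespace IsPrimEisensteinNorm

theorem mul_of_isCoprime {M N : ℤ} (hM : IsPrimEisensteinNorm M) (hN : IsPrimEisensteinNorm N)
    (hMN : IsCoprime M N) : IsPrimEisensteinNorm (M * N) := by
  obtain ⟨c, d, hcd, rfl⟩ := hM
  obtain ⟨s, t, hst, rfl⟩ := hN
  refine ⟨c * s - d * t, c * t + d * s - d * t, IsRelPrime.isCoprime fun w hP hQ ↦ ?_, by ring⟩
  exact hMN.isUnit_of_dvd' (dvd_norm_left_of_dvd_eisensteinMul hst hP hQ)
    (dvd_norm_right_of_dvd_eisensteinMul hcd hP hQ)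

theorem prime_mul {p : ℤ} (hp : Prime p) (hp3 : ¬ p ∣ 3) (hpN : IsPrimEisensteinNorm p)
    {M : ℤ} (hM : IsPrimEisensteinNorm M) : IsPrimEisensteinNorm (p * M) := by
  obtain ⟨c, d, hcd, hpcd⟩ := hpN
  obtain ⟨s, t, hst, rfl⟩ := hM
  by_cases h₁ : IsCoprime (c * s - d * t) (c * t + d * s - d * t)
  · exact ⟨_, _, h₁, by rw [hpcd]; ring⟩
  -- otherwise compose with the conjugate `(c - d) - dω` of `c + dω`
  by_cases h₂ : IsCoprime ((c - d) * s - -d * t) ((c - d) * t + -d * s - -d * t)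
  · exact ⟨_, _, h₂, by rw [hpcd]; ring⟩
  exfalso
  obtain ⟨hP₁, hQ₁⟩ := prime_dvd_of_not_isCoprime_eisensteinMul hp hst hpcd h₁
  obtain ⟨hP₂, hQ₂⟩ := prime_dvd_of_not_isCoprime_eisensteinMul hp hst (by rw [hpcd]; ring) h₂
  have h2cd : p ∣ 2 * c - d := by
    have hs : p ∣ s * (2 * c - d) := by
      rw [show s * (2 * c - d) = (c * s - d * t) + ((c - d) * s - -d * t) by ring]
      exact dvd_add hP₁ hP₂
    have ht : p ∣ t * (2 * c - d) := by
      rw [show t * (2 * c - d) =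
        (c * t + d * s - d * t) + ((c - d) * t + -d * s - -d * t) by ring]
      exact dvd_add hQ₁ hQ₂
    by_contra h
    exact hp.not_isUnit (hst.isUnit_of_dvd' ((hp.dvd_or_dvd hs).resolve_right h)
      ((hp.dvd_or_dvd ht).resolve_right h))
  have hp3d : p ∣ 3 * d ^ 2 := by
    rw [show 3 * d ^ 2 = 4 * p - (2 * c - d) ^ 2 by rw [hpcd]; ring]
    exact dvd_sub (dvd_mul_left _ _) (dvd_pow h2cd two_ne_zero)
  have hd : p ∣ d := hp.dvd_of_dvd_pow ((hp.dvd_or_dvd hp3d).resolve_left hp3)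
  have hc : p ∣ c := by
    refine hp.dvd_of_dvd_pow (n := 2) ?_
    rw [show c ^ 2 = p + c * d - d ^ 2 by rw [hpcd]; ring]
    exact dvd_sub (dvd_add dvd_rfl (hd.mul_left c)) (dvd_pow hd two_ne_zero)
  exact hp.not_isUnit (hcd.isUnit_of_dvd' hc hd)

end IsPrimEisensteinNorm

theorem sq_sub_mul_add_sq_pos {a b : ℤ} (h : a ≠ 0 ∨ b ≠ 0) : 0 < a ^ 2 - a * b + b ^ 2 := by
  rcases h with h | h <;>
    nlinarith [sq_nonneg (2 * a - b), sq_nonneg (2 * b - a), sq_pos_of_ne_zero h]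

theorem sq_sub_mul_add_sq_lt {a b c : ℤ} {k : ℕ} (ha : |a| ≤ k) (hb : |b| ≤ k)
    (hk : (k : ℤ) ^ 2 < c) : a ^ 2 - a * b + b ^ 2 < 3 * c := by
  have ha2 : a ^ 2 ≤ (k : ℤ) ^ 2 := sq_le_sq' (abs_le.mp ha).1 (abs_le.mp ha).2
  have hb2 : b ^ 2 ≤ (k : ℤ) ^ 2 := sq_le_sq' (abs_le.mp hb).1 (abs_le.mp hb).2
  have hab : -(a * b) ≤ (k : ℤ) ^ 2 :=
    calc -(a * b) ≤ |a| * |b| := abs_mul a b ▸ neg_le_abs _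
      _ ≤ k * k := mul_le_mul ha hb (abs_nonneg b) (Nat.cast_nonneg k)
      _ = (k : ℤ) ^ 2 := (sq _).symm
  linarith

theorem sq_sub_mul_add_sq_emod_four_ne_two (a b : ℤ) : (a ^ 2 - a * b + b ^ 2) % 4 ≠ 2 := by
  have key : ∀ x y : ZMod 4, x ^ 2 - x * y + y ^ 2 ≠ 2 := by decide
  intro h
  apply key a b
  have := (ZMod.intCast_eq_intCast_iff' (a ^ 2 - a * b + b ^ 2) 2 4).mpr (by simpa using h)
  push_cast at this
  exact this

theorem exists_abs_le_intCast_eq_mul {n k : ℕ} [NeZero n] (hk : n < (k + 1) ^ 2) (c : ZMod n) :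
    ∃ a b : ℤ, (a ≠ 0 ∨ b ≠ 0) ∧ |a| ≤ k ∧ |b| ≤ k ∧ (a : ZMod n) = c * b := by
  have hcard : Fintype.card (ZMod n) < Fintype.card (Fin (k + 1) × Fin (k + 1)) := by
    simpa [ZMod.card, sq] using hk
  obtain ⟨⟨i₁, j₁⟩, ⟨i₂, j₂⟩, hne, heq⟩ := Fintype.exists_ne_map_eq_of_card_lt
    (fun ij : Fin (k + 1) × Fin (k + 1) ↦ (ij.1 : ZMod n) * c + (ij.2 : ℕ)) hcard
  refine ⟨(j₁ : ℤ) - j₂, (i₂ : ℤ) - i₁, ?_, abs_le.mpr ⟨by omega, by omega⟩,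
    abs_le.mpr ⟨by omega, by omega⟩, ?_⟩
  · by_contra! h
    exact hne (by simp only [Prod.mk.injEq, Fin.ext_iff]; omega)
  · push_cast
    linear_combination heq

theorem exists_sq_sub_self_add_one_eq_zero {p : ℕ} [Fact p.Prime] (hp : p % 3 = 1) :
    ∃ ζ : ZMod p, ζ ^ 2 - ζ + 1 = 0 := by
  obtain ⟨g, hg⟩ := exists_prime_orderOf_dvd_card (G := (ZMod p)ˣ) 3
    (by rw [ZMod.card_units]; omega)
  have hg3 : (g : ZMod p) ^ 3 = 1 := by
    rw [← Units.val_pow_eq_pow_val, ← hg, pow_orderOf_eq_one]; rfl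
  have hg1 : (g : ZMod p) - 1 ≠ 0 := by
    rw [sub_ne_zero, ne_eq, Units.val_eq_one, ← orderOf_eq_one_iff, hg]
    decide
  refine ⟨-g, (mul_eq_zero.mp ?_).resolve_left hg1⟩
  linear_combination hg3

theorem mod_three_eq_one_of_isSquare_neg_three {q : ℕ} [Fact q.Prime] (hq2 : q ≠ 2)
    (hq3 : q ≠ 3) (h : IsSquare (-3 : ZMod q)) : q % 3 = 1 := by
  obtain ⟨c, hc⟩ := h
  have h2 : (2 : ZMod q) ≠ 0 := Ring.two_ne_zero (by rwa [ZMod.ringChar_zmod_n])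
  have h3 : (3 : ZMod q) ≠ 0 := by
    rw [ne_eq, ← Nat.cast_ofNat, ZMod.natCast_eq_zero_iff]
    exact fun h ↦ hq3 ((Nat.prime_dvd_prime_iff_eq Fact.out Nat.prime_three).mp h)
  -- `z = (c - 1) / 2` is a primitive cube root of unity
  obtain ⟨z, hz2⟩ : ∃ z : ZMod q, 2 * z = c - 1 := ⟨(c - 1) / 2, mul_div_cancel₀ _ h2⟩
  have hzq : z ^ 2 + z + 1 = 0 := by
    refine (mul_eq_zero.mp ?_).resolve_left (mul_ne_zero h2 h2)
    linear_combination (2 * z + c + 1) * hz2 - hc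
  have hz1 : z ≠ 1 := by
    rintro rfl
    exact h3 (by linear_combination hzq)
  have hzo : orderOf z = 3 := orderOf_eq_prime (by linear_combination (z - 1) * hzq) hz1
  have := hzo ▸ ZMod.orderOf_dvd_card_sub_one (a := z) (by rintro rfl; simp at hzq)
  have := (Fact.out : q.Prime).two_le
  omega

theorem isPrimEisensteinNorm_of_prime {p : ℕ} (hp : p.Prime) (hp3 : p % 3 = 1) :
    IsPrimEisensteinNorm p := by
  have : Fact p.Prime := ⟨hp⟩
  obtain ⟨ζ, hζ⟩ := exists_sq_sub_self_add_one_eq_zero hp3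
  set k := p.sqrt
  have hkp : k ^ 2 < p := by
    refine lt_of_le_of_ne (sq k ▸ Nat.sqrt_le' p) fun h ↦ ?_
    exact Nat.Prime.not_prime_pow le_rfl (h ▸ hp)
  obtain ⟨a, b, hab0, ha, hb, habζ⟩ := exists_abs_le_intCast_eq_mul (Nat.lt_succ_sqrt' p) ζ
  have hpN : (p : ℤ) ∣ a ^ 2 - a * b + b ^ 2 := by
    rw [← ZMod.intCast_zmod_eq_zero_iff_dvd]
    push_cast
    rw [habζ]
    linear_combination (b : ZMod p) ^ 2 * hζ
  obtain ⟨j, hj⟩ := hpN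
  have hpos := sq_sub_mul_add_sq_pos hab0
  have hlt := sq_sub_mul_add_sq_lt ha hb (by exact_mod_cast hkp : (k : ℤ) ^ 2 < p)
  have hp0 : (0 : ℤ) < p := by exact_mod_cast hp.pos
  obtain rfl | rfl : j = 1 ∨ j = 2 := by
    have : 0 < j := pos_of_mul_pos_right (hj ▸ hpos) hp0.le
    have : j < 3 := lt_of_mul_lt_mul_left (by linarith) hp0.le
    omega
  · refine ⟨a, b, IsRelPrime.isCoprime fun w hwa hwb ↦ ?_, by rw [hj, mul_one]⟩
    refine (Nat.prime_iff_prime_int.mp hp).squarefree w ?_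
    obtain ⟨a', rfl⟩ := hwa
    obtain ⟨b', rfl⟩ := hwb
    exact ⟨a' ^ 2 - a' * b' + b' ^ 2, by rw [mul_one] at hj; rw [← hj]; ring⟩
  · refine absurd ?_ (sq_sub_mul_add_sq_emod_four_ne_two a b)
    have := hp.eq_two_or_odd
    rw [hj]
    omega

theorem isPrimEisensteinNorm_of_forall_prime_dvd {m : ℕ} (hm : m ≠ 0)
    (h : ∀ p : ℕ, p.Prime → p ∣ m → p % 3 = 1) : IsPrimEisensteinNorm m := by
  induction m using UniqueFactorizationMonoid.induction_on_prime with
  | h₁ => exact absurd rfl hm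
  | h₂ u hu => exact ⟨1, 0, isCoprime_one_left, by simp [Nat.isUnit_iff.mp hu]⟩
  | h₃ a p ha hp ih =>
    have hp := Nat.prime_iff.mpr hp
    have hp3 := h p hp (dvd_mul_right p a)
    have hp3' : ¬ (p : ℤ) ∣ 3 := fun h3 ↦ by
      have := (Nat.prime_dvd_prime_iff_eq hp Nat.prime_three).mp (by exact_mod_cast h3)
      omega
    push_cast
    exact (isPrimEisensteinNorm_of_prime hp hp3).prime_mul (Nat.prime_iff_prime_int.mp hp) hp3'
      (ih ha fun q hq hqa ↦ h q hq (hqa.mul_left p))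

theorem isPrimEisensteinNorm_of_not_nine_dvd {m : ℕ} (hm : m ≠ 0) (h9 : ¬ 9 ∣ m)
    (h : ∀ p : ℕ, p.Prime → p ∣ m → p ≠ 3 → p % 3 = 1) : IsPrimEisensteinNorm m := by
  by_cases h3 : 3 ∣ m
  · obtain ⟨m', rfl⟩ := h3
    have h3m' : ¬ 3 ∣ m' := fun ⟨k, hk⟩ ↦ h9 ⟨k, by rw [hk]; ring⟩
    have hm' : IsPrimEisensteinNorm m' := isPrimEisensteinNorm_of_forall_prime_dvd (by omega)
      fun p hp hpm ↦ h p hp (hpm.mul_left 3) fun hp3 ↦ h3m' (hp3 ▸ hpm)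
    push_cast
    refine IsPrimEisensteinNorm.mul_of_isCoprime ⟨1, -1, isCoprime_one_left, by norm_num⟩ hm' ?_
    exact (Int.prime_three.coprime_iff_not_dvd).mpr (by exact_mod_cast h3m')
  · exact isPrimEisensteinNorm_of_forall_prime_dvd hm fun p hp hpm ↦
      h p hp hpm fun hp3 ↦ h3 (hp3 ▸ hpm)

theorem sq_emod_four (x : ℤ) : x ^ 2 % 4 = x % 2 := by
  rcases Int.even_or_odd' x with ⟨k, rfl | rfl⟩ <;> ring_nf <;> omega

theorem IsCoprime.emod_two_eq_one {u v : ℤ} (huv : IsCoprime u v) : u % 2 = 1 ∨ v % 2 = 1 := by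
  by_contra! h
  exact Int.prime_two.not_isUnit (huv.isUnit_of_dvd' (by omega) (by omega))

theorem three_mul_sq_sub_sq_emod_four {x y a b : ℤ} (hxy : IsCoprime x y) (hab : IsCoprime a b)
    (h : 3 * x ^ 2 - y ^ 2 = a ^ 2 + b ^ 2) : (3 * x ^ 2 - y ^ 2) % 4 = 2 := by
  have := sq_emod_four x
  have := sq_emod_four y
  have := sq_emod_four a
  have := sq_emod_four b
  have := hxy.emod_two_eq_one
  have := hab.emod_two_eq_one
  rcases Int.emod_two_eq_zero_or_one x with hx | hx <;>
    rcases Int.emod_two_eq_zero_or_one y with hy | hy <;>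
    rcases Int.emod_two_eq_zero_or_one a with ha | ha <;> omega

theorem not_nine_dvd_three_mul_sq_sub_sq {x y : ℤ} (hxy : IsCoprime x y) :
    ¬ 9 ∣ 3 * x ^ 2 - y ^ 2 := by
  rintro ⟨k, hk⟩
  have hy : (3 : ℤ) ∣ y := Int.prime_three.dvd_of_dvd_pow (n := 2) ⟨x ^ 2 - 3 * k, by linarith⟩
  obtain ⟨y', rfl⟩ := hy
  have hx : (3 : ℤ) ∣ x := Int.prime_three.dvd_of_dvd_pow (n := 2) ⟨k + y' ^ 2, by linarith⟩
  exact Int.prime_three.not_isUnit (hxy.isUnit_of_dvd' hx (dvd_mul_right 3 y'))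

theorem isSquare_intCast_of_dvd_mul_sq_sub_sq {q : ℕ} [Fact q.Prime] {k x y : ℤ}
    (hxy : IsCoprime x y) (h : (q : ℤ) ∣ k * x ^ 2 - y ^ 2) : IsSquare (k : ZMod q) := by
  have hq : Prime (q : ℤ) := Nat.prime_iff_prime_int.mp Fact.out
  have hx : (x : ZMod q) ≠ 0 := by
    rw [ne_eq, ZMod.intCast_zmod_eq_zero_iff_dvd]
    intro hqx
    refine hq.not_isUnit (hxy.isUnit_of_dvd' hqx (hq.dvd_of_dvd_pow (n := 2) ?_))
    rw [show y ^ 2 = k * x ^ 2 - (k * x ^ 2 - y ^ 2) by ring]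
    exact dvd_sub ((dvd_pow hqx two_ne_zero).mul_left k) h
  rw [← ZMod.intCast_zmod_eq_zero_iff_dvd] at h
  push_cast at h
  exact ⟨y / x, by field_simp; linear_combination h⟩

theorem mod_three_eq_one_of_dvd {x y a b : ℤ} (hxy : IsCoprime x y) (hab : IsCoprime a b)
    {q : ℕ} (hq : q.Prime) (hq2 : q ≠ 2) (hq3 : q ≠ 3) (hqxy : (q : ℤ) ∣ 3 * x ^ 2 - y ^ 2)
    (hqab : (q : ℤ) ∣ a ^ 2 + b ^ 2) : q % 3 = 1 := by
  have : Fact q.Prime := ⟨hq⟩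
  have h3 := isSquare_intCast_of_dvd_mul_sq_sub_sq hxy hqxy
  have h1 := isSquare_intCast_of_dvd_mul_sq_sub_sq (k := -1) hab
    (by rw [show -1 * a ^ 2 - b ^ 2 = -(a ^ 2 + b ^ 2) by ring]; exact hqab.neg_right)
  exact mod_three_eq_one_of_isSquare_neg_three hq2 hq3 (by simpa using h1.mul h3)

theorem stmt_12 :
    let A : Set ℤ := {n | ∃ x y : ℤ, Int.gcd x y = 1 ∧ n = 3*x^2 - y^2}
    let B : Set ℤ := {n | ∃ x y : ℤ, Int.gcd x y = 1 ∧ n = x^2 + y^2}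
    let C : Set ℤ := {n | ∃ x y : ℤ, Int.gcd x y = 1 ∧ n = 2*(x^2 - x*y + y^2)}
    A ∩ B ⊆ C ∧ ¬ (C ⊆ A ∩ B) := by
  intro A B C
  constructor
  · rintro n ⟨⟨x, y, hxy, rfl⟩, a, b, hab, hn⟩
    rw [← Int.isCoprime_iff_gcd_eq_one] at hxy hab
    have h4 := three_mul_sq_sub_sq_emod_four hxy hab hn
    obtain ⟨m, hm⟩ : ∃ m : ℕ, 3 * x ^ 2 - y ^ 2 = 2 * m :=
      ⟨((3 * x ^ 2 - y ^ 2) / 2).toNat, by have : 0 ≤ a ^ 2 + b ^ 2 := (by positivity); omega⟩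
    have hm9 : ¬ 9 ∣ m := fun h9 ↦ not_nine_dvd_three_mul_sq_sub_sq hxy
      (hm ▸ (Int.natCast_dvd_natCast.mpr h9).mul_left 2)
    obtain ⟨u, v, huv, hmuv⟩ := isPrimEisensteinNorm_of_not_nine_dvd (by omega) hm9
      fun q hq hqm hq3 ↦ by
        have hqn : (q : ℤ) ∣ 3 * x ^ 2 - y ^ 2 :=
          hm ▸ (Int.natCast_dvd_natCast.mpr hqm).mul_left 2
        exact mod_three_eq_one_of_dvd hxy hab hq (by rintro rfl; omega) hq3 hqn (hn ▸ hqn)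
    exact ⟨u, v, Int.isCoprime_iff_gcd_eq_one.mp huv, by rw [hm, hmuv]⟩
  · intro h
    obtain ⟨a, b, hab, h6⟩ := (h (⟨2, 1, rfl, by norm_num⟩ : (6 : ℤ) ∈ C)).2
    have h1 := isSquare_intCast_of_dvd_mul_sq_sub_sq (q := 3) (k := -1)
      (Int.isCoprime_iff_gcd_eq_one.mpr hab) ⟨-2, by push_cast; linarith⟩
    exact (ZMod.exists_sq_eq_neg_one_iff (p := 3)).not.mpr (by decide) (by simpa using h1)
end

section
/- Let 𝒜 = {n : ℤ | ∃ x y : ℤ, gcd(x, y) = 1 ∧ n = 3x² − y²}, ℬ = {n : ℤ | ∃ x y : ℤ, gcd(x, y) = 1 ∧ n = x² + y²}, and 𝒞 = {n : ℤ | ∃ x y : ℤ, gcd(x, y) = 1 ∧ n = 2(x² − xy + y²)}. Then ℬ ∩ 𝒞 is a proper subset of 𝒜, i.e., ℬ ∩ 𝒞 ⊆ 𝒜 and 𝒜 ⊄ ℬ ∩ 𝒞. -/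
/-!
Write `n = a² + b² = 2m` with `m = c² - cd + d²`, both representations primitive. Every prime
`p ∣ m` is odd and has `-1` and `-3` as quadratic residues (from `a² + b²` and
`(2c - d)² + 3d² = 4m`), so `p ≡ 1 (mod 12)`. Then `3` is a residue mod `p` by reciprocity, and
Thue's lemma writes `p = e² - 3f²`. Starting from `2 = 3·1² - 1²`, the composition
`(3X² - Y²)(e² - 3f²) = 3(Xe ± Yf)² - (Ye ± 3Xf)²` multiplies in the primes of `m` one at a time,
and for at least one sign the new pair is again coprime. Conversely `-1 = 3·0² - 1²` lies in `𝒜`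
but is not a sum of two squares.
-/

theorem Prime.not_dvd_right_of_dvd_sq_add_mul {R : Type*} [CommRing R] {p x y z : R}
    (hp : Prime p) (hxy : IsCoprime x y) (h : p ∣ x ^ 2 + y * z) : ¬ p ∣ y := fun hy =>
  hp.not_isUnit
    (hxy.isUnit_of_dvd' (hp.dvd_of_dvd_pow ((dvd_add_left (hy.mul_right z)).mp h)) hy)

theorem ZMod.isSquare_neg_three_of_dvd_sq_sub_mul_add_sq {p : ℕ} [Fact p.Prime] {x y : ℤ}
    (hxy : IsCoprime x y) (h : (p : ℤ) ∣ x ^ 2 - x * y + y ^ 2) : IsSquare (-3 : ZMod p) := by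
  have hy : (y : ZMod p) ≠ 0 := by
    rw [Ne, ZMod.intCast_zmod_eq_zero_iff_dvd]
    exact (Nat.prime_iff_prime_int.mp Fact.out).not_dvd_right_of_dvd_sq_add_mul (z := y - x) hxy
      (by rwa [show x ^ 2 + y * (y - x) = x ^ 2 - x * y + y ^ 2 by ring])
  have h0 : (x : ZMod p) ^ 2 - x * y + y ^ 2 = 0 := by
    exact_mod_cast (ZMod.intCast_zmod_eq_zero_iff_dvd _ _).mpr h
  exact ⟨(2 * x - y) / y, by field_simp; linear_combination (-4) * h0⟩

theorem ZMod.isSquare_three_iff {p : ℕ} [Fact p.Prime] (hp : p % 4 = 1) :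
    IsSquare (3 : ZMod p) ↔ p % 3 ≠ 2 := by
  have hrec := ZMod.exists_sq_eq_prime_iff_of_mod_four_eq_one (q := 3) hp (by norm_num)
  rw [Nat.cast_ofNat] at hrec
  rw [hrec, ← ZMod.natCast_mod p 3]
  have : p % 3 < 3 := Nat.mod_lt _ (by norm_num)
  interval_cases p % 3 <;> decide

theorem Nat.Prime.mod_twelve_eq_one_of_isSquare {p : ℕ} (hp : p.Prime) (hp2 : p ≠ 2)
    (h1 : IsSquare (-1 : ZMod p)) (h3 : IsSquare (-3 : ZMod p)) : p % 12 = 1 := by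
  have := Fact.mk hp
  have hp4 : p % 4 = 1 := by
    have := ZMod.exists_sq_eq_neg_one_iff.mp h1
    have := hp.eq_two_or_odd.resolve_left hp2
    omega
  have hsq3 : IsSquare (3 : ZMod p) := by
    rw [show (3 : ZMod p) = -1 * -3 by ring]
    exact h1.mul h3
  have hp3 : p % 3 ≠ 2 := (ZMod.isSquare_three_iff hp4).mp hsq3
  have h3p : ¬ 3 ∣ p := fun h =>
    absurd ((Nat.prime_dvd_prime_iff_eq Nat.prime_three hp).mp h) (by omega)
  omega

theorem Int.odd_sq_sub_mul_add_sq {x y : ℤ} (hxy : IsCoprime x y) :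
    Odd (x ^ 2 - x * y + y ^ 2) := by
  have : ¬ (Even x ∧ Even y) := fun ⟨hx, hy⟩ =>
    by simpa [Int.isUnit_iff] using hxy.isUnit_of_dvd' hx.two_dvd hy.two_dvd
  rw [← Int.not_even_iff_odd]
  simp only [even_add, even_sub, even_pow, ne_eq, OfNat.ofNat_ne_zero, not_false_eq_true,
    and_true, even_mul, iff_self_or]
  tauto

theorem Nat.Prime.mod_twelve_eq_one_of_dvd_sq_sub_mul_add_sq {p : ℕ} (hp : p.Prime)
    {a b c d : ℤ} (hab : IsCoprime a b) (hcd : IsCoprime c d)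
    (h : a ^ 2 + b ^ 2 = 2 * (c ^ 2 - c * d + d ^ 2)) (hpd : (p : ℤ) ∣ c ^ 2 - c * d + d ^ 2) :
    p % 12 = 1 := by
  have := Fact.mk hp
  refine hp.mod_twelve_eq_one_of_isSquare ?_ ?_
    (ZMod.isSquare_neg_three_of_dvd_sq_sub_mul_add_sq hcd hpd)
  · rintro rfl
    exact Int.not_even_iff_odd.mpr (Int.odd_sq_sub_mul_add_sq hcd) (even_iff_two_dvd.mpr hpd)
  · refine ZMod.isSquare_neg_one_of_dvd ?_
      (ZMod.isSquare_neg_one_of_eq_sq_add_sq_of_isCoprime rfl hab)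
    rw [← Int.natCast_dvd, h]
    exact hpd.mul_left 2

-- Thue's lemma: pigeonhole on `(i, j) ↦ i - r j` for `0 ≤ i, j ≤ √n`.
theorem ZMod.exists_intCast_eq_mul_intCast_of_abs_le_sqrt (n : ℕ) [NeZero n] (r : ZMod n) :
    ∃ e f : ℤ, (e, f) ≠ 0 ∧ |e| ≤ n.sqrt ∧ |f| ≤ n.sqrt ∧ (e : ZMod n) = r * f := by
  have hcard : Fintype.card (ZMod n) < Fintype.card (Fin (n.sqrt + 1) × Fin (n.sqrt + 1)) := by
    simpa [ZMod.card, ← sq] using Nat.lt_succ_sqrt' n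
  obtain ⟨⟨i, j⟩, ⟨i', j'⟩, hne, heq⟩ := Fintype.exists_ne_map_eq_of_card_lt
    (fun ij : Fin (n.sqrt + 1) × Fin (n.sqrt + 1) => ((ij.1 : ℕ) : ZMod n) - r * (ij.2 : ℕ))
    hcard
  refine ⟨(i : ℤ) - i', (j : ℤ) - j', ?_, ?_, ?_, ?_⟩
  · simp only [ne_eq, Prod.mk.injEq, Fin.ext_iff, Prod.mk_eq_zero] at hne ⊢
    omega
  · rw [abs_le]; omega
  · rw [abs_le]; omega
  · push_cast
    linear_combination heq

theorem Nat.Prime.sqrt_mul_self_lt {p : ℕ} (hp : p.Prime) : p.sqrt * p.sqrt < p :=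
  (Nat.sqrt_le p).lt_of_ne fun h => hp.prime.not_isSquare ⟨p.sqrt, h.symm⟩

instance : Zsqrtd.Nonsquare 3 :=
  ⟨fun n h => by
    have : n ≤ 2 := by nlinarith
    interval_cases n <;> omega⟩

theorem Nat.Prime.exists_eq_sq_sub_three_mul_sq {p : ℕ} (hp : p.Prime) (h12 : p % 12 = 1) :
    ∃ e f : ℤ, (p : ℤ) = e ^ 2 - 3 * f ^ 2 := by
  have := Fact.mk hp
  obtain ⟨t, ht⟩ : IsSquare (3 : ZMod p) := (ZMod.isSquare_three_iff (by omega)).mpr (by omega)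
  obtain ⟨e, f, hef, he, hf, het⟩ := ZMod.exists_intCast_eq_mul_intCast_of_abs_le_sqrt p t
  obtain ⟨K, hK⟩ : (p : ℤ) ∣ e ^ 2 - 3 * f ^ 2 := by
    rw [← ZMod.intCast_zmod_eq_zero_iff_dvd]
    push_cast
    rw [het]
    linear_combination (-(f : ZMod p) ^ 2) * ht
  have hs : (p.sqrt : ℤ) ^ 2 < p := by exact_mod_cast (sq p.sqrt).symm ▸ hp.sqrt_mul_self_lt
  have he2 : e ^ 2 < p := by nlinarith [sq_abs e, abs_nonneg e]
  have hf2 : f ^ 2 < p := by nlinarith [sq_abs f, abs_nonneg f]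
  have hK : K = 0 ∨ K = -1 ∨ K = -2 := by
    have : -3 < K := by nlinarith
    have : K < 1 := by nlinarith
    omega
  rcases hK with rfl | rfl | rfl
  · obtain ⟨rfl, rfl⟩ := Zsqrtd.divides_sq_eq_zero_z (d := 3) (x := e) (y := f)
      (by push_cast; linear_combination hK)
    exact absurd rfl hef
  · have hp3 : (p : ZMod 3) = 1 := by rw [← ZMod.natCast_mod, show p % 3 = 1 by omega]; rfl
    have h30 : (3 : ZMod 3) = 0 := by decide
    have : (e : ZMod 3) ^ 2 = -1 := by
      have hK3 := congrArg (Int.cast : ℤ → ZMod 3) hK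
      push_cast at hK3
      rw [hp3] at hK3
      linear_combination hK3 + (f : ZMod 3) ^ 2 * h30
    exact absurd this (by generalize (e : ZMod 3) = u; revert u; decide)
  · -- `e ≡ f (mod 2)`, and then `p = ((e + 3f) / 2)² - 3((e + f) / 2)²`
    obtain ⟨v, hv⟩ : Even (e + f) := by
      have : Even (e ^ 2 - 3 * f ^ 2) := ⟨-p, by linarith⟩
      simpa [parity_simps, show ¬ Even (3 : ℤ) by decide] using this
    obtain rfl : e = v + v - f := by linarith
    exact ⟨v + f, v, by linarith⟩

theorem Int.not_dvd_of_prime_eq_sq_sub_three_mul_sq {p e f : ℤ} (hp : Prime p) (h3 : ¬ p ∣ 3)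
    (hpef : p = e ^ 2 - 3 * f ^ 2) : ¬ p ∣ e := by
  intro he
  have hf : p ∣ f := by
    have : p ∣ 3 * f ^ 2 := by
      rw [show 3 * f ^ 2 = e ^ 2 - p by rw [hpef]; ring]
      exact dvd_sub (dvd_pow he two_ne_zero) dvd_rfl
    exact hp.dvd_of_dvd_pow ((hp.dvd_or_dvd this).resolve_left h3)
  have hsq : p ^ 2 ∣ p := by
    nth_rewrite 2 [hpef]
    exact dvd_sub (pow_dvd_pow_of_dvd he 2) ((pow_dvd_pow_of_dvd hf 2).mul_left 3)
  exact hp.not_isUnit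
    (isUnit_of_dvd_one ((mul_dvd_mul_iff_left hp.ne_zero).mp (by rwa [mul_one, ← sq])))

theorem IsCoprime.dvd_of_dvd_mul_of_dvd_mul {R : Type*} [CommRing R] {X Y p q : R}
    (hXY : IsCoprime X Y) (hX : q ∣ X * p) (hY : q ∣ Y * p) : q ∣ p := by
  obtain ⟨a, b, hab⟩ := hXY
  rw [show p = a * (X * p) + b * (Y * p) by linear_combination -p * hab]
  exact dvd_add (hX.mul_left a) (hY.mul_left b)

theorem Int.dvd_of_not_isCoprime_of_eq_sq_sub_three_mul_sq {p e f X Y : ℤ} (hp : Prime p)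
    (hpef : p = e ^ 2 - 3 * f ^ 2) (hXY : IsCoprime X Y)
    (h : ¬ IsCoprime (X * e + Y * f) (Y * e + 3 * X * f)) :
    p ∣ X * e + Y * f ∧ p ∣ Y * e + 3 * X * f := by
  by_cases h0 : X * e + Y * f = 0 ∧ Y * e + 3 * X * f = 0
  · simp [h0]
  obtain ⟨q, hq, hqu, hqv⟩ :
      ∃ q, Prime q ∧ q ∣ X * e + Y * f ∧ q ∣ Y * e + 3 * X * f := by
    by_contra! H
    exact h (isCoprime_of_prime_dvd h0 H)
  have hqp : q ∣ p := by
    refine hXY.dvd_of_dvd_mul_of_dvd_mul ?_ ?_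
    · rw [show X * p = e * (X * e + Y * f) - f * (Y * e + 3 * X * f) by rw [hpef]; ring]
      exact dvd_sub (hqu.mul_left e) (hqv.mul_left f)
    · rw [show Y * p = e * (Y * e + 3 * X * f) - 3 * f * (X * e + Y * f) by rw [hpef]; ring]
      exact dvd_sub (hqv.mul_left e) (hqu.mul_left (3 * f))
  have hassoc := hq.associated_of_dvd hp hqp
  exact ⟨hassoc.dvd_iff_dvd_left.mp hqu, hassoc.dvd_iff_dvd_left.mp hqv⟩

theorem Int.exists_isCoprime_three_mul_sq_sub_sq_eq_mul {p e f X Y : ℤ} (hp : Prime p)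
    (hp6 : ¬ p ∣ 6) (hpef : p = e ^ 2 - 3 * f ^ 2) (hXY : IsCoprime X Y) :
    ∃ X' Y' : ℤ, IsCoprime X' Y' ∧ 3 * X' ^ 2 - Y' ^ 2 = (3 * X ^ 2 - Y ^ 2) * p := by
  by_cases hplus : IsCoprime (X * e + Y * f) (Y * e + 3 * X * f)
  · exact ⟨_, _, hplus, by rw [hpef]; ring⟩
  by_cases hminus : IsCoprime (X * e + Y * -f) (Y * e + 3 * X * -f)
  · exact ⟨_, _, hminus, by rw [hpef]; ring⟩
  obtain ⟨hu, hv⟩ := dvd_of_not_isCoprime_of_eq_sq_sub_three_mul_sq hp hpef hXY hplus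
  obtain ⟨hu', hv'⟩ :=
    dvd_of_not_isCoprime_of_eq_sq_sub_three_mul_sq hp (by rw [hpef]; ring) hXY hminus
  have h2e : ¬ p ∣ 2 * e := hp.not_dvd_mul (fun h => hp6 (h.mul_right 3))
    (not_dvd_of_prime_eq_sq_sub_three_mul_sq hp (fun h => hp6 (h.mul_left 2)) hpef)
  have hX : p ∣ 2 * e * X := by
    rw [show 2 * e * X = (X * e + Y * f) + (X * e + Y * -f) by ring]
    exact dvd_add hu hu'
  have hY : p ∣ 2 * e * Y := by
    rw [show 2 * e * Y = (Y * e + 3 * X * f) + (Y * e + 3 * X * -f) by ring]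
    exact dvd_add hv hv'
  exact (hp.not_isUnit (hXY.isUnit_of_dvd' ((hp.dvd_or_dvd hX).resolve_left h2e)
    ((hp.dvd_or_dvd hY).resolve_left h2e))).elim

theorem Nat.exists_isCoprime_three_mul_sq_sub_sq_eq_two_mul {n : ℕ} (hn : n ≠ 0)
    (h : ∀ p : ℕ, p.Prime → p ∣ n → p % 12 = 1) :
    ∃ X Y : ℤ, IsCoprime X Y ∧ 3 * X ^ 2 - Y ^ 2 = 2 * n := by
  induction n using induction_on_primes with
  | zero => contradiction
  | one => exact ⟨1, 1, isCoprime_one_left, by norm_num⟩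
  | prime_mul p a hp ih =>
    obtain ⟨X, Y, hXY, hrep⟩ := ih (right_ne_zero_of_mul hn)
      fun q hq hqa => h q hq (hqa.mul_left p)
    have hp12 := h p hp (dvd_mul_right p a)
    obtain ⟨e, f, hef⟩ := hp.exists_eq_sq_sub_three_mul_sq hp12
    have hp6 : ¬ (p : ℤ) ∣ 6 := fun h6 => by
      have := Nat.le_of_dvd (by norm_num) (by exact_mod_cast h6 : p ∣ 6)
      have := hp.two_le
      omega
    obtain ⟨X', Y', hXY', hrep'⟩ :=
      Int.exists_isCoprime_three_mul_sq_sub_sq_eq_mul (Nat.prime_iff_prime_int.mp hp) hp6 hef hXY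
    exact ⟨X', Y', hXY', by rw [hrep', hrep]; push_cast; ring⟩

theorem stmt_13 :
    let A : Set ℤ := {n | ∃ x y : ℤ, Int.gcd x y = 1 ∧ n = 3*x^2 - y^2}
    let B : Set ℤ := {n | ∃ x y : ℤ, Int.gcd x y = 1 ∧ n = x^2 + y^2}
    let C : Set ℤ := {n | ∃ x y : ℤ, Int.gcd x y = 1 ∧ n = 2*(x^2 - x*y + y^2)}
    B ∩ C ⊆ A ∧ ¬ (A ⊆ B ∩ C) := by
  intro A B C
  refine ⟨?_, fun h => ?_⟩
  · rintro n ⟨⟨a, b, hab, rfl⟩, c, d, hcd, hn⟩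
    rw [← Int.isCoprime_iff_gcd_eq_one] at hab hcd
    have hm0 : 0 ≤ c ^ 2 - c * d + d ^ 2 := by
      nlinarith [sq_nonneg (c - d), sq_nonneg c, sq_nonneg d]
    obtain ⟨X, Y, hXY, hrep⟩ := Nat.exists_isCoprime_three_mul_sq_sub_sq_eq_two_mul
      (Int.natAbs_ne_zero.mpr fun h0 => by simpa [h0] using Int.odd_sq_sub_mul_add_sq hcd)
      fun p hp hpd =>
        hp.mod_twelve_eq_one_of_dvd_sq_sub_mul_add_sq hab hcd hn (Int.natCast_dvd.mpr hpd)
    refine ⟨X, Y, Int.isCoprime_iff_gcd_eq_one.mp hXY, ?_⟩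
    rw [hn, hrep, Int.natCast_natAbs, abs_of_nonneg hm0]
  · obtain ⟨⟨x, y, -, hxy⟩, -⟩ := h (show (-1 : ℤ) ∈ A from ⟨0, 1, rfl, by norm_num⟩)
    nlinarith [sq_nonneg x, sq_nonneg y]
end

section
/- Let D be a positive odd integer and let A be an integer with 0 < A < D, gcd(A, D) = 1, and A ≡ 1 or A ≡ −1 (mod 6). Suppose that no prime p with p ≡ 11 (mod 12) divides 3D² − A². Then there exist integers B and C with gcd(B, C) = 1 such that A² + B² + C² = 3D²; in particular (A, B, C, D) is a primitive solution of A² + B² + C² = 3D². -/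
/-! The number `N = 3D² - A²` is `≡ 2 (mod 4)` since `A` and `D` are odd, and prime to `3` since
`3 ∤ A`. A prime `q ∣ N` cannot divide `D` (it would divide `A`), so `3 ≡ (A/D)²` is a square
mod `q`; for `q ≡ 3 (mod 4)` quadratic reciprocity then forces `q ≡ 11 (mod 12)`. Hence `N` is
twice a product of primes `≡ 1 (mod 4)`, and such a number is a sum `B² + C²` of coprime
squares: compose prime by prime with the Brahmagupta–Fibonacci identity, choosing at each step
the sign that keeps the pair coprime. -/

theorem IsCoprime.dvd_of_dvd_mul_of_dvd_mul_s16 {R : Type*} [CommRing R] {x y d n : R}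
    (hxy : IsCoprime x y) (hx : d ∣ n * x) (hy : d ∣ n * y) : d ∣ n := by
  obtain ⟨s, t, hst⟩ := hxy
  have hn : n = s * (n * x) + t * (n * y) := by linear_combination -n * hst
  rw [hn]
  exact dvd_add (hx.mul_left s) (hy.mul_left t)

theorem dvd_sq_add_sq_of_dvd_of_dvd {R : Type*} [CommRing R] {x y u v d : R}
    (hxy : IsCoprime x y) (ha : d ∣ u * x - v * y) (hb : d ∣ u * y + v * x) :
    d ∣ u ^ 2 + v ^ 2 := by
  refine hxy.dvd_of_dvd_mul_of_dvd_mul_s16 ?_ ?_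
  · have h : (u ^ 2 + v ^ 2) * x = u * (u * x - v * y) + v * (u * y + v * x) := by ring
    exact h ▸ dvd_add (ha.mul_left u) (hb.mul_left v)
  · have h : (u ^ 2 + v ^ 2) * y = -v * (u * x - v * y) + u * (u * y + v * x) := by ring
    exact h ▸ dvd_add (ha.mul_left _) (hb.mul_left u)

theorem isCoprime_of_prime_sq_add_sq {R : Type*} [CommRing R] [IsDomain R]
    [IsPrincipalIdealRing R] {u v : R} (hp : Prime (u ^ 2 + v ^ 2)) : IsCoprime u v := by
  refine isCoprime_of_prime_dvd (fun ⟨hu, hv⟩ => hp.ne_zero (by simp [hu, hv]))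
    fun z hz hzu hzv => hz.not_isUnit (hp.squarefree z ?_)
  rw [sq, sq]
  exact dvd_add (mul_dvd_mul hzu hzu) (mul_dvd_mul hzv hzv)

theorem Int.exists_prime_dvd_of_not_isCoprime {a b : ℤ} (h : ¬IsCoprime a b) :
    ∃ p : ℤ, Prime p ∧ p ∣ a ∧ p ∣ b := by
  by_cases hab : a = 0 ∧ b = 0
  · exact ⟨2, Int.prime_two, by simp [hab.1], by simp [hab.2]⟩
  · by_contra! H
    exact h (isCoprime_of_prime_dvd hab H)

theorem Int.isCoprime_or_isCoprime_of_prime_sq_add_sq {x y u v : ℤ} (hxy : IsCoprime x y)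
    (hp : Prime (u ^ 2 + v ^ 2)) (hodd : Odd (u ^ 2 + v ^ 2) ∨ Odd (x ^ 2 + y ^ 2)) :
    IsCoprime (u * x - v * y) (u * y + v * x) ∨ IsCoprime (u * x + v * y) (u * y - v * x) := by
  have huv := isCoprime_of_prime_sq_add_sq hp
  by_contra! ⟨h₁, h₂⟩
  obtain ⟨q, hq, hqa, hqb⟩ := Int.exists_prime_dvd_of_not_isCoprime h₁
  obtain ⟨r, hr, hra, hrb⟩ := Int.exists_prime_dvd_of_not_isCoprime h₂
  have hqP : q ∣ u ^ 2 + v ^ 2 := dvd_sq_add_sq_of_dvd_of_dvd hxy hqa hqb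
  have hqM : q ∣ x ^ 2 + y ^ 2 :=
    dvd_sq_add_sq_of_dvd_of_dvd huv (by rwa [mul_comm x, mul_comm y])
      (by rwa [mul_comm x, mul_comm y, add_comm])
  have hrP : r ∣ u ^ 2 + v ^ 2 := by
    simpa only [neg_sq] using dvd_sq_add_sq_of_dvd_of_dvd (u := u) (v := -v) hxy
      (by rwa [neg_mul, sub_neg_eq_add]) (by rwa [neg_mul, ← sub_eq_add_neg])
  -- `q` and `r` are associates of the prime `u ^ 2 + v ^ 2`, which therefore divides both pairs
  have hPq := (hq.associated_of_dvd hp hqP).symm.dvd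
  have hPr := (hr.associated_of_dvd hp hrP).symm.dvd
  have hPu : u ^ 2 + v ^ 2 ∣ 2 * u := by
    refine hxy.dvd_of_dvd_mul_of_dvd_mul_s16 ?_ ?_
    · have h : 2 * u * x = (u * x - v * y) + (u * x + v * y) := by ring
      exact h ▸ dvd_add (hPq.trans hqa) (hPr.trans hra)
    · have h : 2 * u * y = (u * y + v * x) + (u * y - v * x) := by ring
      exact h ▸ dvd_add (hPq.trans hqb) (hPr.trans hrb)
  have hPv : u ^ 2 + v ^ 2 ∣ 2 * v := by
    refine hxy.dvd_of_dvd_mul_of_dvd_mul_s16 ?_ ?_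
    · have h : 2 * v * x = (u * y + v * x) - (u * y - v * x) := by ring
      exact h ▸ dvd_sub (hPq.trans hqb) (hPr.trans hrb)
    · have h : 2 * v * y = (u * x + v * y) - (u * x - v * y) := by ring
      exact h ▸ dvd_sub (hPr.trans hra) (hPq.trans hqa)
  have hP2 : u ^ 2 + v ^ 2 ∣ 2 := huv.dvd_of_dvd_mul_of_dvd_mul_s16 hPu hPv
  refine hp.not_isUnit ?_
  rcases hodd with hP | hM
  · exact (Int.isCoprime_two_left.mpr hP).isUnit_of_dvd' hP2 dvd_rfl
  · exact (Int.isCoprime_two_left.mpr hM).isUnit_of_dvd' hP2 (hPq.trans hqM)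

theorem Nat.exists_isCoprime_sq_add_sq {n : ℕ} (h4 : ¬4 ∣ n)
    (hn : ∀ p : ℕ, p.Prime → p ∣ n → p % 4 ≠ 3) :
    ∃ x y : ℤ, IsCoprime x y ∧ x ^ 2 + y ^ 2 = n := by
  induction n using induction_on_primes with
  | zero => exact absurd (dvd_zero 4) h4
  | one => exact ⟨1, 0, isCoprime_one_left, by norm_num⟩
  | prime_mul p a hp ih =>
    have : Fact p.Prime := ⟨hp⟩
    obtain ⟨u, v, huv⟩ := Nat.Prime.sq_add_sq (hn p hp (dvd_mul_right p a))
    have hpuv : (p : ℤ) = (u : ℤ) ^ 2 + (v : ℤ) ^ 2 := by exact_mod_cast huv.symm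
    have hP : _root_.Prime ((u : ℤ) ^ 2 + (v : ℤ) ^ 2) := by
      rw [← hpuv]
      exact Nat.prime_iff_prime_int.mp hp
    obtain ⟨x, y, hxy, hxya⟩ :=
      ih (fun h => h4 (h.mul_left p)) fun q hq hqa => hn q hq (hqa.mul_left p)
    have hodd : Odd ((u : ℤ) ^ 2 + (v : ℤ) ^ 2) ∨ Odd (x ^ 2 + y ^ 2) := by
      rw [← hpuv, hxya, Int.odd_coe_nat, Int.odd_coe_nat]
      rcases hp.eq_two_or_odd' with rfl | hpo
      · exact Or.inr (Nat.odd_iff.mpr (by omega))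
      · exact Or.inl hpo
    push_cast
    rw [hpuv, ← hxya]
    rcases Int.isCoprime_or_isCoprime_of_prime_sq_add_sq hxy hP hodd with h | h
    · exact ⟨_, _, h, by ring⟩
    · exact ⟨_, _, h, by ring⟩

theorem Nat.Prime.mod_twelve_eq_eleven_of_isSquare_three {q : ℕ} (hq : q.Prime)
    (hq4 : q % 4 = 3) (hq3 : q ≠ 3) (hsq : IsSquare (3 : ZMod q)) : q % 12 = 11 := by
  have : Fact q.Prime := ⟨hq⟩
  have : Fact (Nat.Prime 3) := ⟨Nat.prime_three⟩
  have hq_nonsq : ¬IsSquare (q : ZMod 3) :=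
    (ZMod.exists_sq_eq_prime_iff_of_mod_four_eq_three hq4 (by norm_num) hq3).mp
      (by exact_mod_cast hsq)
  have hq0 : q % 3 ≠ 0 := fun h =>
    hq3 ((Nat.prime_dvd_prime_iff_eq Nat.prime_three hq).mp (Nat.dvd_of_mod_eq_zero h)).symm
  have hq1 : q % 3 ≠ 1 := fun h => hq_nonsq ⟨1, by rw [← ZMod.natCast_mod, h]; norm_num⟩
  omega

theorem ZMod.isSquare_intCast_of_dvd_mul_sq_sub_sq {q : ℕ} [Fact q.Prime] {c a d : ℤ}
    (had : IsCoprime a d) (h : (q : ℤ) ∣ c * d ^ 2 - a ^ 2) : IsSquare (c : ZMod q) := by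
  have hqZ : Prime (q : ℤ) := Nat.prime_iff_prime_int.mp Fact.out
  have hd : (d : ZMod q) ≠ 0 := by
    rw [Ne, ZMod.intCast_zmod_eq_zero_iff_dvd]
    intro hqd
    have hqa2 : (q : ℤ) ∣ a ^ 2 := (dvd_sub_right ((hqd.pow two_ne_zero).mul_left c)).mp h
    exact hqZ.not_isUnit (had.isUnit_of_dvd' (hqZ.dvd_of_dvd_pow hqa2) hqd)
  rw [← ZMod.intCast_zmod_eq_zero_iff_dvd] at h
  push_cast at h
  exact ⟨a / d, by field_simp; linear_combination h⟩

theorem mod_four_ne_three_of_prime_dvd_three_mul_sq_sub_sq {p : ℕ} (hp : p.Prime) {a d : ℤ}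
    (had : IsCoprime a d) (ha3 : ¬(3 : ℤ) ∣ a) (h : (p : ℤ) ∣ 3 * d ^ 2 - a ^ 2)
    (hp12 : p % 12 ≠ 11) : p % 4 ≠ 3 := by
  have : Fact p.Prime := ⟨hp⟩
  intro hp4
  have hp3 : p ≠ 3 := by
    rintro rfl
    push_cast at h
    have h3a2 : (3 : ℤ) ∣ a ^ 2 := (dvd_sub_right (dvd_mul_right _ _)).mp h
    exact ha3 (Int.prime_three.dvd_of_dvd_pow h3a2)
  have hsq : IsSquare (3 : ZMod p) := by
    exact_mod_cast ZMod.isSquare_intCast_of_dvd_mul_sq_sub_sq had h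
  exact hp12 (hp.mod_twelve_eq_eleven_of_isSquare_three hp4 hp3 hsq)

theorem not_four_dvd_three_mul_sq_sub_sq {a d : ℤ} (ha : Odd a) (hd : Odd d) :
    ¬4 ∣ 3 * d ^ 2 - a ^ 2 := by
  obtain ⟨k, rfl⟩ := ha
  obtain ⟨l, rfl⟩ := hd
  have h : 3 * (2 * l + 1) ^ 2 - (2 * k + 1) ^ 2 = 4 * (3 * l ^ 2 + 3 * l - k ^ 2 - k) + 2 := by
    ring
  omega

theorem stmt_16_general (D A : ℤ) (hDodd : Odd D)
    (hApos : 0 < A) (hAD : A < D) (hgcdAD : Int.gcd A D = 1)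
    (hA6 : A ≡ 1 [ZMOD 6] ∨ A ≡ -1 [ZMOD 6])
    (hnop : ∀ p : ℕ, p.Prime → p % 12 = 11 → ¬ ((p : ℤ) ∣ 3*D^2 - A^2)) :
    ∃ B C : ℤ, Int.gcd B C = 1 ∧ A^2 + B^2 + C^2 = 3*D^2 ∧
      Int.gcd (Int.gcd A B) C = 1 := by
  have hA : Odd A ∧ ¬(3 : ℤ) ∣ A := by
    rw [Int.odd_iff]
    unfold Int.ModEq at hA6
    omega
  obtain ⟨n, hn⟩ : ∃ n : ℕ, (n : ℤ) = 3 * D ^ 2 - A ^ 2 :=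
    ⟨_, Int.toNat_of_nonneg (by nlinarith)⟩
  have h4 : ¬4 ∣ n := fun h =>
    not_four_dvd_three_mul_sq_sub_sq hA.1 hDodd (hn ▸ Int.natCast_dvd_natCast.mpr h)
  have hfac : ∀ p : ℕ, p.Prime → p ∣ n → p % 4 ≠ 3 := fun p hp hpn =>
    have hpN : (p : ℤ) ∣ 3 * D ^ 2 - A ^ 2 := hn ▸ Int.natCast_dvd_natCast.mpr hpn
    mod_four_ne_three_of_prime_dvd_three_mul_sq_sub_sq hp
      (Int.isCoprime_iff_gcd_eq_one.mpr hgcdAD) hA.2 hpN fun h12 => hnop p hp h12 hpN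
  obtain ⟨B, C, hBC, hsum⟩ := Nat.exists_isCoprime_sq_add_sq h4 hfac
  have hgcd : Int.gcd B C = 1 := Int.isCoprime_iff_gcd_eq_one.mp hBC
  exact ⟨B, C, hgcd, by linarith, by rw [Int.gcd_assoc, hgcd, Nat.cast_one, Int.gcd_one_right]⟩

theorem stmt_16 (D A : ℤ) (hDpos : 0 < D) (hDodd : Odd D)
    (hApos : 0 < A) (hAD : A < D) (hgcdAD : Int.gcd A D = 1)
    (hA6 : A ≡ 1 [ZMOD 6] ∨ A ≡ -1 [ZMOD 6])
    (hnop : ∀ p : ℕ, p.Prime → p % 12 = 11 → ¬ ((p : ℤ) ∣ 3*D^2 - A^2)) :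
    ∃ B C : ℤ, Int.gcd B C = 1 ∧ A^2 + B^2 + C^2 = 3*D^2 ∧
      Int.gcd (Int.gcd A B) C = 1 :=
  stmt_16_general D A hDodd hApos hAD hgcdAD hA6 hnop
end

section
/- Let A, B, C, D be integers with A² + B² + C² = 3D², and let U = 3D − (A + B + C) and V = 3D + (A + B + C). Suppose A, B, C, D are all odd and gcd(A, B, C) = 1. Then U and V are both even, and it is not the case that 4 divides both U and V; moreover, for every prime q with q ≡ −1 (mod 6), q does not divide both U and V. -/
/-!
`U` and `V` are the difference and sum of the odd numbers `3D` and `A + B + C`, hence even, and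
`U + V = 6D ≡ 2 (mod 4)`. If an odd prime `q` divided both, it would divide `A + B + C` and, through
`U V = 2 ((A - B)² - (A - B)(C - B) + (C - B)²)`, the binary form `x² - x y + y²` at
`(A - B, C - B)`. For `q ≡ 2 (mod 3)` this form has no nontrivial zero mod `q`: a zero `z = x / y`
of `z² - z + 1` would satisfy `z³ = -1` and `z^(q-1) = 1` with `q - 1 ≡ 1 (mod 3)`, forcing
`z² = 1` and then `3 = 0`. So `q` divides `A - B`, `C - B` and `A + B + C`, hence `3B`, and thus
all of `A`, `B`, `C`.
-/

theorem sub_mul_add_eq_two_mul_sq_sub_mul_add_sq {R : Type*} [CommRing R] {A B C D : R}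
    (h : A ^ 2 + B ^ 2 + C ^ 2 = 3 * D ^ 2) :
    (3 * D - (A + B + C)) * (3 * D + (A + B + C)) =
      2 * ((A - B) ^ 2 - (A - B) * (C - B) + (C - B) ^ 2) := by
  linear_combination -3 * h

namespace ZMod

variable {p : ℕ} [Fact p.Prime]

theorem sq_sub_self_add_one_ne_zero (hp : p % 3 = 2) (z : ZMod p) : z ^ 2 - z + 1 ≠ 0 := by
  intro hz
  have hz0 : z ≠ 0 := by rintro rfl; norm_num at hz
  have hz3 : z ^ 3 = -1 := by linear_combination (z + 1) * hz
  obtain ⟨k, hk⟩ : ∃ k, p - 1 = 3 * k + 1 := ⟨p / 3, by omega⟩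
  have hzk : (-1) ^ k * z = 1 := by
    rw [← hz3, ← pow_mul, ← pow_succ, ← hk, pow_card_sub_one_eq_one hz0]
  have hz2 : z ^ 2 = 1 := by
    calc z ^ 2 = ((-1) ^ k * z) ^ 2 := by
          rw [mul_pow, ← pow_mul, mul_comm k, pow_mul, neg_one_sq, one_pow, one_mul]
      _ = 1 := by rw [hzk, one_pow]
  have h3 : ((3 : ℕ) : ZMod p) = 0 := by
    push_cast
    linear_combination (z + 2) * hz - (z + 1) * hz2
  have hp3 : p = 3 :=
    (Nat.prime_dvd_prime_iff_eq Fact.out Nat.prime_three).mp ((natCast_eq_zero_iff 3 p).mp h3)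
  omega

theorem eq_zero_of_sq_sub_mul_add_sq_eq_zero (hp : p % 3 = 2) {x y : ZMod p}
    (h : x ^ 2 - x * y + y ^ 2 = 0) : x = 0 ∧ y = 0 := by
  have hy : y = 0 := by
    by_contra hy
    apply sq_sub_self_add_one_ne_zero hp (x / y)
    field_simp
    linear_combination h
  subst hy
  simpa using h

end ZMod

theorem not_dvd_sub_and_dvd_add_of_sq_add_sq_add_sq_eq {A B C D : ℤ}
    (heq : A ^ 2 + B ^ 2 + C ^ 2 = 3 * D ^ 2) (hgcd : Int.gcd (Int.gcd A B) C = 1)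
    {q : ℕ} [Fact q.Prime] (hq : q % 6 = 5) :
    ¬ ((q : ℤ) ∣ 3 * D - (A + B + C) ∧ (q : ℤ) ∣ 3 * D + (A + B + C)) := by
  rintro ⟨hU, hV⟩
  have h2 : ((2 : ℕ) : ZMod q) ≠ 0 := by
    rw [Ne, ZMod.natCast_eq_zero_iff]
    exact fun h => by have := Nat.le_of_dvd two_pos h; omega
  have h3 : ((3 : ℕ) : ZMod q) ≠ 0 := by
    rw [Ne, ZMod.natCast_eq_zero_iff]
    exact fun h => by have := Nat.le_of_dvd three_pos h; omega
  push_cast at h2 h3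
  rw [← ZMod.intCast_zmod_eq_zero_iff_dvd] at hU hV
  push_cast at hU hV
  have hS : (A + B + C : ZMod q) = 0 := by
    refine (mul_eq_zero.mp ?_).resolve_left h2
    linear_combination hV - hU
  have heq' : (A : ZMod q) ^ 2 + (B : ZMod q) ^ 2 + (C : ZMod q) ^ 2 = 3 * (D : ZMod q) ^ 2 := by
    exact_mod_cast congrArg (Int.cast : ℤ → ZMod q) heq
  have hform : ((A : ZMod q) - B) ^ 2 - (A - B) * (C - B) + ((C : ZMod q) - B) ^ 2 = 0 := by
    refine (mul_eq_zero.mp ?_).resolve_left h2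
    rw [← sub_mul_add_eq_two_mul_sq_sub_mul_add_sq heq', hU, zero_mul]
  obtain ⟨hAB, hCB⟩ := ZMod.eq_zero_of_sq_sub_mul_add_sq_eq_zero (by omega) hform
  have hB : (B : ZMod q) = 0 := by
    refine (mul_eq_zero.mp ?_).resolve_left h3
    linear_combination hS - hAB - hCB
  have hA : (A : ZMod q) = 0 := by linear_combination hAB + hB
  have hC : (C : ZMod q) = 0 := by linear_combination hCB + hB
  simp only [ZMod.intCast_zmod_eq_zero_iff_dvd] at hA hB hC
  have : (q : ℤ) ∣ (1 : ℕ) := hgcd ▸ Int.dvd_coe_gcd (Int.dvd_coe_gcd hA hB) hC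
  exact (Fact.out : q.Prime).one_lt.ne' (Nat.dvd_one.mp (Int.natCast_dvd_natCast.mp this))

theorem stmt_19 (A B C D : ℤ) (heq : A^2 + B^2 + C^2 = 3 * D^2)
    (hA : Odd A) (hB : Odd B) (hC : Odd C) (hD : Odd D)
    (hgcd : Int.gcd (Int.gcd A B) C = 1) :
    let U : ℤ := 3*D - (A + B + C)
    let V : ℤ := 3*D + (A + B + C)
    Even U ∧ Even V ∧ ¬ ((4 ∣ U) ∧ (4 ∣ V)) ∧
    ∀ q : ℕ, q.Prime → q % 6 = 5 → ¬ (((q : ℤ) ∣ U) ∧ ((q : ℤ) ∣ V)) := by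
  intro U V
  have h3D : Odd (3 * D) := (by decide : Odd (3 : ℤ)).mul hD
  have hS : Odd (A + B + C) := (hA.add_odd hB).add_odd hC
  refine ⟨h3D.sub_odd hS, h3D.add_odd hS, ?_, fun q hq h6 => ?_⟩
  · rintro ⟨hU, hV⟩
    obtain ⟨d, rfl⟩ := hD
    omega
  · have := Fact.mk hq
    exact not_dvd_sub_and_dvd_add_of_sq_add_sq_add_sq_eq heq hgcd h6
end
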